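/- arXiv:2103.02599 — 3 statements merged into one kernel-verified Lean document; each statement's English description precedes it below -/
import Mathlib

section
/- Let c₁ ≥ 0 and let R be the 2×2 rotation matrix with angle φ, i.e. R = [[cos φ, −sin φ],[sin φ, cos φ]]. Then there exist a constant c₂ > 0 and a set B ⊂ ℤ² with exactly 5 elements such that for all u, v ∈ ℝ² with ‖v‖₂ ≤ c₁ there exists b ∈ B with ‖Ru + v − b‖₂ < c₂ − 1/2 or ‖Ru + v − b‖₂ < ‖u‖₂ − 1. -/
/-!
A rotation preserves norms, so `w = R u + v` has norm within `c₁` of `‖u‖`. If `‖u‖` is small,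
the lattice point `0` is close to `w`. Otherwise take `b = ±n eᵢ` along a coordinate axis with
`|wᵢ|` maximal: then `‖w‖ ≤ √2 |wᵢ| ≤ 2 |wᵢ|` gives `n ‖w‖ ≤ 2 ⟪w, b⟫`, so
`‖w - b‖² ≤ ‖w‖² - n ‖w‖ + n²`, which is less than `(‖w‖ - c₁ - 1)²` once `n ≥ 2 c₁ + 3` and
`‖w‖ > n²`.
-/

open Matrix Real

theorem Matrix.norm_toLp_mulVec_of_mem_orthogonalGroup {n : Type*} [Fintype n] [DecidableEq n]
    {A : Matrix n n ℝ} (hA : A ∈ orthogonalGroup n ℝ) (u : EuclideanSpace ℝ n) :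
    ‖WithLp.toLp 2 (A *ᵥ u.ofLp)‖ = ‖u‖ := by
  rw [mem_orthogonalGroup_iff'] at hA
  have key : (A *ᵥ u.ofLp) ⬝ᵥ (A *ᵥ u.ofLp) = u.ofLp ⬝ᵥ u.ofLp := by
    rw [dotProduct_mulVec, ← mulVec_transpose, mulVec_mulVec, hA, one_mulVec]
  rw [← sq_eq_sq₀ (norm_nonneg _) (norm_nonneg _), ← real_inner_self_eq_norm_sq,
    ← real_inner_self_eq_norm_sq, EuclideanSpace.inner_eq_star_dotProduct,
    EuclideanSpace.inner_eq_star_dotProduct]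
  simpa [dotProduct_comm] using key

theorem rotation_mem_orthogonalGroup (φ : ℝ) :
    !![cos φ, -sin φ; sin φ, cos φ] ∈ orthogonalGroup (Fin 2) ℝ := by
  rw [mem_orthogonalGroup_iff']
  ext i j
  fin_cases i <;> fin_cases j <;> simp [mul_apply, Fin.sum_univ_two] <;> ring_nf <;> simp

theorem norm_sub_lt_norm_sub_of_two_inner_ge {E : Type*} [NormedAddCommGroup E]
    [InnerProductSpace ℝ E] {w b : E} {d : ℝ} (hd : 0 ≤ d) (hb : 2 * d + 1 ≤ ‖b‖)
    (hw : ‖b‖ ^ 2 < ‖w‖) (hwb : ‖w‖ * ‖b‖ ≤ 2 * inner ℝ w b) :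
    ‖w - b‖ < ‖w‖ - d := by
  have hb0 : 0 ≤ ‖b‖ := norm_nonneg b
  refine lt_of_pow_lt_pow_left₀ 2 (by nlinarith) ?_
  rw [norm_sub_sq_real]
  nlinarith

theorem EuclideanSpace.exists_norm_sq_le_card_mul_sq {ι : Type*} [Fintype ι] [Nonempty ι]
    (w : EuclideanSpace ℝ ι) : ∃ i, ‖w‖ ^ 2 ≤ Fintype.card ι * w i ^ 2 := by
  obtain ⟨i, hi⟩ := Finite.exists_max fun j => |w j|
  refine ⟨i, ?_⟩
  rw [EuclideanSpace.real_norm_sq_eq, ← nsmul_eq_mul, ← Finset.card_univ, ← Finset.sum_const]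
  exact Finset.sum_le_sum fun j _ => sq_le_sq.2 (hi j)

def axisPoints (n : ℕ) : Finset (Fin 2 → ℤ) :=
  {0, Pi.single 0 n, Pi.single 0 (-n : ℤ), Pi.single 1 n, Pi.single 1 (-n : ℤ)}

theorem card_axisPoints {n : ℕ} (hn : n ≠ 0) : (axisPoints n).card = 5 := by
  rw [axisPoints, Finset.card_insert_of_notMem, Finset.card_insert_of_notMem,
    Finset.card_insert_of_notMem, Finset.card_insert_of_notMem, Finset.card_singleton] <;>
    simp [funext_iff, Fin.forall_fin_two] <;> omega

theorem exists_mem_axisPoints_norm_mul_le_two_inner (w : EuclideanSpace ℝ (Fin 2)) (n : ℕ) :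
    ∃ b ∈ axisPoints n, ‖WithLp.toLp 2 (fun i => (b i : ℝ))‖ = n ∧
      ‖w‖ * n ≤ 2 * inner ℝ w (WithLp.toLp 2 (fun i => (b i : ℝ))) := by
  obtain ⟨i, hi⟩ := w.exists_norm_sq_le_card_mul_sq
  have hwi : ‖w‖ ≤ 2 * |w i| := by
    rw [← pow_le_pow_iff_left₀ (norm_nonneg w) (by positivity) two_ne_zero]
    simp only [Fintype.card_fin, Nat.cast_ofNat] at hi
    nlinarith [sq_abs (w i)]
  set k : ℤ := if 0 ≤ w i then n else -n
  have hk : |(k : ℝ)| = n ∧ (k : ℝ) * w i = n * |w i| := by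
    unfold k; split_ifs with h
    · simp [abs_of_nonneg h]
    · simp [abs_of_neg (not_le.1 h)]
  have hcast : WithLp.toLp 2 (fun j => ((Pi.single i k : Fin 2 → ℤ) j : ℝ)) =
      EuclideanSpace.single i (k : ℝ) := by
    ext j; by_cases h : j = i <;> simp [h]
  refine ⟨Pi.single i k, ?_, ?_, ?_⟩
  · unfold k; fin_cases i <;> split_ifs <;> simp [axisPoints]
  · rw [hcast, PiLp.norm_single, Real.norm_eq_abs, hk.1]
  · rw [hcast, EuclideanSpace.inner_single_right]
    simp only [conj_trivial, hk.2]
    nlinarith [n.cast_nonneg (α := ℝ)]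

theorem stmt_1 (c₁ : ℝ) (hc₁ : 0 ≤ c₁) (φ : ℝ) :
    ∃ c₂ : ℝ, 0 < c₂ ∧ ∃ B : Finset (Fin 2 → ℤ), B.card = 5 ∧
      ∀ u v : EuclideanSpace ℝ (Fin 2), ‖v‖ ≤ c₁ →
        ∃ b ∈ B,
          ‖(WithLp.equiv 2 (Fin 2 → ℝ)).symm
              ((!![Real.cos φ, -Real.sin φ; Real.sin φ, Real.cos φ]).mulVec
                ((WithLp.equiv 2 (Fin 2 → ℝ)) u)) + v -
            (WithLp.equiv 2 (Fin 2 → ℝ)).symm (fun i => (b i : ℝ))‖ < c₂ - 1/2 ∨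
          ‖(WithLp.equiv 2 (Fin 2 → ℝ)).symm
              ((!![Real.cos φ, -Real.sin φ; Real.sin φ, Real.cos φ]).mulVec
                ((WithLp.equiv 2 (Fin 2 → ℝ)) u)) + v -
            (WithLp.equiv 2 (Fin 2 → ℝ)).symm (fun i => (b i : ℝ))‖ < ‖u‖ - 1 := by
  obtain ⟨n, hn⟩ := exists_nat_ge (2 * c₁ + 3)
  have hn0 : n ≠ 0 := by rintro rfl; norm_num at hn; linarith
  refine ⟨n ^ 2 + 2 * c₁ + 1, by positivity, axisPoints n, card_axisPoints hn0, fun u v hv => ?_⟩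
  simp only [WithLp.equiv_symm_apply, WithLp.equiv_apply]
  set Ru := WithLp.toLp 2 (!![cos φ, -sin φ; sin φ, cos φ] *ᵥ u.ofLp)
  have hRu : ‖Ru‖ = ‖u‖ :=
    norm_toLp_mulVec_of_mem_orthogonalGroup (rotation_mem_orthogonalGroup φ) u
  have hupper : ‖Ru + v‖ ≤ ‖u‖ + c₁ := by linarith [norm_add_le Ru v]
  have hlower : ‖u‖ - c₁ ≤ ‖Ru + v‖ := by
    have := norm_sub_le (Ru + v) v
    rw [add_sub_cancel_right] at this
    linarith
  by_cases hu : ‖u‖ ≤ n ^ 2 + c₁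
  · exact ⟨0, by simp [axisPoints], Or.inl (by simp [← Pi.zero_def]; linarith)⟩
  obtain ⟨b, hb, hbn, hbw⟩ := exists_mem_axisPoints_norm_mul_le_two_inner (Ru + v) n
  refine ⟨b, hb, Or.inr ?_⟩
  have := norm_sub_lt_norm_sub_of_two_inner_ge (w := Ru + v) (d := c₁ + 1) (by linarith)
    (by rw [hbn]; linarith) (by rw [hbn]; linarith) (by rwa [hbn])
  linarith
end

section
/- Let M ∈ ℤ^{m×m} with det M ≠ 0 and let D ⊂ ℤ^m be a finite set containing 0 such that ℤ^m ⊆ Fin_D(M). Then Fin_D(M) = ⋃_{n∈ℤ} M^n ℤ^m. -/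
/-!
Fix `A = M` viewed over `ℚ`, which is invertible since `det M ≠ 0`. If `x = ∑_{k ∈ I} A^k d_k`
and `n = min I`, then every `A^k d_k = A^n (M^(k-n) d_k)` with `M^(k-n)` an integer matrix, so
`x ∈ A^n ℤ^m`. Conversely `Fin_D(M)` is stable under `A^n` (shift the index set by `n`), so
`A^n z ∈ Fin_D(M)` for every `z ∈ ℤ^m ⊆ Fin_D(M)`.
-/

/-- The set of vectors representable as a finite sum `∑_{k ∈ I} M^k d_k` with `I ⊂ ℤ`
finite nonempty and digits `d_k ∈ D`, where negative powers of `M` are taken over `ℚ`. -/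
noncomputable def FinD {m : ℕ} (M : Matrix (Fin m) (Fin m) ℤ) (D : Set (Fin m → ℤ)) :
    Set (Fin m → ℚ) :=
  {x | ∃ I : Finset ℤ, I.Nonempty ∧ ∃ c : ℤ → (Fin m → ℤ), (∀ k ∈ I, c k ∈ D) ∧
    x = ∑ k ∈ I, ((M.map (Int.cast : ℤ → ℚ)) ^ k).mulVec (fun i => (c k i : ℚ))}

open Matrix

theorem Matrix.map_intCast_mulVec {m n : Type*} [Fintype n] (N : Matrix m n ℤ) (v : n → ℤ) :
    N.map (Int.cast : ℤ → ℚ) *ᵥ (fun i => (v i : ℚ)) = fun i => ((N *ᵥ v) i : ℚ) :=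
  funext fun i => (RingHom.map_mulVec (Int.castRingHom ℚ) N v i).symm

theorem Matrix.isUnit_det_map_intCast {n : Type*} [Fintype n] [DecidableEq n]
    {M : Matrix n n ℤ} (hM : M.det ≠ 0) : IsUnit (M.map (Int.cast : ℤ → ℚ)).det := by
  rw [← Int.cast_det, isUnit_iff_ne_zero]
  exact_mod_cast hM

namespace FinD

variable {m : ℕ} {M : Matrix (Fin m) (Fin m) ℤ} {D : Set (Fin m → ℤ)}

theorem zpow_mulVec_intCast_of_le (hM : M.det ≠ 0) {n k : ℤ} (hnk : n ≤ k) (v : Fin m → ℤ) :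
    (M.map (Int.cast : ℤ → ℚ)) ^ k *ᵥ (fun i => (v i : ℚ))
      = (M.map (Int.cast : ℤ → ℚ)) ^ n *ᵥ (fun i => ((M ^ (k - n).toNat *ᵥ v) i : ℚ)) := by
  have hpow : (M.map (Int.cast : ℤ → ℚ)) ^ k
      = (M.map (Int.cast : ℤ → ℚ)) ^ n * (M ^ (k - n).toNat).map (Int.cast : ℤ → ℚ) := by
    have hcast := Matrix.map_pow M (Int.castRingHom ℚ) (k - n).toNat
    rw [Int.coe_castRingHom] at hcast
    rw [hcast, ← zpow_natCast, ← zpow_add (isUnit_det_map_intCast hM),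
      Int.toNat_of_nonneg (sub_nonneg.2 hnk), add_sub_cancel]
  rw [hpow, ← mulVec_mulVec, map_intCast_mulVec]

theorem exists_zpow_mulVec_of_mem (hM : M.det ≠ 0) {x : Fin m → ℚ} (hx : x ∈ FinD M D) :
    ∃ (n : ℤ) (v : Fin m → ℤ), x = (M.map (Int.cast : ℤ → ℚ)) ^ n *ᵥ (fun i => (v i : ℚ)) := by
  obtain ⟨I, hI, c, -, rfl⟩ := hx
  refine ⟨I.min' hI, ∑ k ∈ I, M ^ (k - I.min' hI).toNat *ᵥ c k, ?_⟩
  have hsum : (fun i => ((∑ k ∈ I, M ^ (k - I.min' hI).toNat *ᵥ c k) i : ℚ))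
      = ∑ k ∈ I, fun i => ((M ^ (k - I.min' hI).toNat *ᵥ c k) i : ℚ) := by
    ext i
    simp
  rw [hsum, mulVec_sum]
  exact Finset.sum_congr rfl fun k hk => zpow_mulVec_intCast_of_le hM (I.min'_le k hk) (c k)

theorem zpow_mulVec_mem (hM : M.det ≠ 0) (n : ℤ) {x : Fin m → ℚ} (hx : x ∈ FinD M D) :
    (M.map (Int.cast : ℤ → ℚ)) ^ n *ᵥ x ∈ FinD M D := by
  obtain ⟨I, hI, c, hc, rfl⟩ := hx
  refine ⟨I.map (addRightEmbedding n), hI.map, fun k => c (k - n), ?_, ?_⟩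
  · simpa using hc
  · rw [Finset.sum_map, mulVec_sum]
    refine Finset.sum_congr rfl fun k _ => ?_
    simp only [addRightEmbedding_apply, add_sub_cancel_right]
    rw [mulVec_mulVec, ← zpow_add (isUnit_det_map_intCast hM), add_comm]

end FinD

theorem stmt_10_general {m : ℕ} (M : Matrix (Fin m) (Fin m) ℤ) (hM : M.det ≠ 0)
    (D : Set (Fin m → ℤ))
    (hZ : ∀ z : Fin m → ℤ, (fun i => (z i : ℚ)) ∈ FinD M D) :
    FinD M D = {x | ∃ (n : ℤ) (v : Fin m → ℤ),
      x = ((M.map (Int.cast : ℤ → ℚ)) ^ n).mulVec (fun i => (v i : ℚ))} := by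
  ext x
  constructor
  · exact FinD.exists_zpow_mulVec_of_mem hM
  · rintro ⟨n, v, rfl⟩
    exact FinD.zpow_mulVec_mem hM n (hZ v)

theorem stmt_10 {m : ℕ} (M : Matrix (Fin m) (Fin m) ℤ) (hM : M.det ≠ 0)
    (D : Set (Fin m → ℤ)) (hD : D.Finite) (h0 : (0 : Fin m → ℤ) ∈ D)
    (hZ : ∀ z : Fin m → ℤ, (fun i => (z i : ℚ)) ∈ FinD M D) :
    FinD M D = {x | ∃ (n : ℤ) (v : Fin m → ℤ),
      x = ((M.map (Int.cast : ℤ → ℚ)) ^ n).mulVec (fun i => (v i : ℚ))} :=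
  stmt_10_general M hM D hZ
end

section
/- Let M ∈ ℤ^{m×m}, det M = Δ ≠ 0, and let D ⊂ ℤ^m be a finite digit set with 0 ∈ D such that ℤ^m ⊆ Fin_D(M). Then Fin_D(M) = ⋃_{k∈ℕ} (1/Δ^k)ℤ^m if and only if there exists ℓ ∈ ℕ such that M^ℓ ≡ 0 (mod Δ) entrywise. -/
open Matrix Filter

theorem intCast_div_eq_inv_smul {ι : Type*} (v : ι → ℤ) (c : ℚ) :
    (fun i => (v i : ℚ) / c) = c⁻¹ • fun i => (v i : ℚ) :=
  funext fun i => div_eq_inv_mul (v i : ℚ) c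

namespace Matrix

variable {ι : Type*} [Fintype ι]

theorem map_intCast_mulVec_s12 (N : Matrix ι ι ℤ) (v : ι → ℤ) :
    N.map (Int.cast : ℤ → ℚ) *ᵥ (fun i => (v i : ℚ)) = fun i => ((N *ᵥ v) i : ℚ) :=
  funext fun i => ((Int.castRingHom ℚ).map_mulVec N v i).symm

variable [DecidableEq ι]

theorem zpow_neg_mulVec_pow_mulVec {K : Type*} [Field K] {A : Matrix ι ι K} (hA : IsUnit A.det)
    (n : ℕ) (x : ι → K) : A ^ (-(n : ℤ)) *ᵥ (A ^ n *ᵥ x) = x := by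
  rw [mulVec_mulVec, ← zpow_natCast, ← zpow_add hA, neg_add_cancel, zpow_zero, one_mulVec]

theorem det_map_intCast (M : Matrix ι ι ℤ) : (M.map (Int.cast : ℤ → ℚ)).det = M.det :=
  ((Int.castRingHom ℚ).map_det M).symm

theorem isUnit_det_map_intCast_s12 {M : Matrix ι ι ℤ} (hM : M.det ≠ 0) :
    IsUnit (M.map (Int.cast : ℤ → ℚ)).det := by
  rw [det_map_intCast]
  exact isUnit_iff_ne_zero.2 (Int.cast_ne_zero.2 hM)

theorem map_intCast_pow (M : Matrix ι ι ℤ) (n : ℕ) :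
    (M ^ n).map (Int.cast : ℤ → ℚ) = M.map Int.cast ^ n :=
  map_pow (Int.castRingHom ℚ).mapMatrix M n

theorem map_intCast_zpow_mulVec {k : ℤ} (hk : 0 ≤ k) (M : Matrix ι ι ℤ) (v : ι → ℤ) :
    M.map (Int.cast : ℤ → ℚ) ^ k *ᵥ (fun i => (v i : ℚ)) =
      fun i => ((M ^ k.toNat *ᵥ v) i : ℚ) := by
  rw [← map_intCast_mulVec_s12, map_intCast_pow, ← zpow_natCast, Int.toNat_of_nonneg hk]

theorem det_pow_smul_map_intCast_zpow_neg {M : Matrix ι ι ℤ} (hM : M.det ≠ 0) (n : ℕ) :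
    (M.det : ℚ) ^ n • M.map (Int.cast : ℤ → ℚ) ^ (-(n : ℤ)) =
      (M.adjugate ^ n).map Int.cast := by
  have hΔ : (M.det : ℚ) ^ n ≠ 0 := pow_ne_zero n (Int.cast_ne_zero.2 hM)
  rw [zpow_neg_natCast, ← inv_pow', inv_def, det_map_intCast, Ring.inverse_eq_inv', smul_pow,
    inv_pow, smul_inv_smul₀ hΔ, map_intCast_pow]
  exact congrArg (· ^ n) ((Int.castRingHom ℚ).map_adjugate M).symm

end Matrix

section FinD

variable {m : ℕ} {M : Matrix (Fin m) (Fin m) ℤ} {D : Set (Fin m → ℤ)}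

theorem zpow_mulVec_mem_finD (hM : M.det ≠ 0) {x : Fin m → ℚ} (hx : x ∈ FinD M D) (j : ℤ) :
    M.map (Int.cast : ℤ → ℚ) ^ j *ᵥ x ∈ FinD M D := by
  have hA := isUnit_det_map_intCast_s12 hM
  obtain ⟨I, hI, c, hc, rfl⟩ := hx
  refine ⟨I.image (· + j), hI.image _, fun k => c (k - j), ?_, ?_⟩
  · exact Finset.forall_mem_image.2 fun k hk => by simpa using hc k hk
  · rw [Finset.sum_image fun _ _ _ _ h => add_right_cancel h, ← mulVecLin_apply, map_sum]
    refine Finset.sum_congr rfl fun k _ => ?_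
    rw [mulVecLin_apply, mulVec_mulVec, ← zpow_add hA, add_comm]
    simp only [add_sub_cancel_right]

theorem eventually_pow_mulVec_integral_of_mem_finD (hM : M.det ≠ 0) {x : Fin m → ℚ}
    (hx : x ∈ FinD M D) :
    ∀ᶠ n : ℕ in atTop, ∃ v : Fin m → ℤ,
      M.map (Int.cast : ℤ → ℚ) ^ n *ᵥ x = fun i => (v i : ℚ) := by
  obtain ⟨I, -, c, -, rfl⟩ := hx
  have hI : ∀ᶠ n : ℕ in atTop, ∀ k ∈ I, 0 ≤ (n : ℤ) + k :=
    I.eventually_all.2 fun k _ => (eventually_ge_atTop (-k).toNat).mono fun n hn => by omega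
  filter_upwards [hI] with n hn
  refine ⟨∑ k ∈ I, M ^ ((n : ℤ) + k).toNat *ᵥ c k, ?_⟩
  have hcast : (fun i => ((∑ k ∈ I, M ^ ((n : ℤ) + k).toNat *ᵥ c k) i : ℚ)) =
      ∑ k ∈ I, fun i => ((M ^ ((n : ℤ) + k).toNat *ᵥ c k) i : ℚ) := by
    ext i
    simp only [Finset.sum_apply, Int.cast_sum]
  rw [hcast, ← mulVecLin_apply, map_sum]
  refine Finset.sum_congr rfl fun k hk => ?_
  rw [mulVecLin_apply, mulVec_mulVec, ← zpow_natCast, ← zpow_add (isUnit_det_map_intCast_s12 hM),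
    map_intCast_zpow_mulVec (hn k hk)]

theorem finD_subset_intCast_div_det_pow (hM : M.det ≠ 0) :
    FinD M D ⊆ {x | ∃ (k : ℕ) (v : Fin m → ℤ), x = fun i => (v i : ℚ) / (M.det : ℚ) ^ k} := by
  intro x hx
  obtain ⟨n, v, hv⟩ := (eventually_pow_mulVec_integral_of_mem_finD hM hx).exists
  refine ⟨n, M.adjugate ^ n *ᵥ v, ?_⟩
  have hΔ : (M.det : ℚ) ^ n ≠ 0 := pow_ne_zero n (Int.cast_ne_zero.2 hM)
  rw [← zpow_neg_mulVec_pow_mulVec (isUnit_det_map_intCast_s12 hM) n x, hv,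
    ← inv_smul_smul₀ hΔ (M.map Int.cast ^ (-(n : ℤ))), det_pow_smul_map_intCast_zpow_neg hM,
    smul_mulVec, map_intCast_mulVec_s12, intCast_div_eq_inv_smul]

theorem intCast_div_det_pow_mem_finD (hM : M.det ≠ 0)
    (hZ : ∀ z : Fin m → ℤ, (fun i => (z i : ℚ)) ∈ FinD M D) {ℓ : ℕ}
    (hℓ : ∀ i j, M.det ∣ (M ^ ℓ) i j) (k : ℕ) (v : Fin m → ℤ) :
    (fun i => (v i : ℚ) / (M.det : ℚ) ^ k) ∈ FinD M D := by
  choose N hN using hℓ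
  have hΔ : (M.det : ℚ) ^ k ≠ 0 := pow_ne_zero k (Int.cast_ne_zero.2 hM)
  have hpow : M.map (Int.cast : ℤ → ℚ) ^ (ℓ * k) =
      (M.det : ℚ) ^ k • (Matrix.of N ^ k).map Int.cast := by
    have hMN : M ^ ℓ = M.det • Matrix.of N := by
      ext i j
      simp [hN i j]
    rw [pow_mul, ← map_intCast_pow, ← map_intCast_pow, hMN, smul_pow,
      map_smul' _ _ _ Int.cast_mul, Int.cast_pow]
  have hx : M.map (Int.cast : ℤ → ℚ) ^ (ℓ * k) *ᵥ (fun i => (v i : ℚ) / (M.det : ℚ) ^ k) =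
      fun i => ((Matrix.of N ^ k *ᵥ v) i : ℚ) := by
    rw [hpow, intCast_div_eq_inv_smul, smul_mulVec, mulVec_smul, smul_smul, mul_inv_cancel₀ hΔ,
      one_smul, map_intCast_mulVec_s12]
  have hmem := zpow_mulVec_mem_finD hM (hZ (Matrix.of N ^ k *ᵥ v)) (-((ℓ * k : ℕ) : ℤ))
  rwa [← hx, zpow_neg_mulVec_pow_mulVec (isUnit_det_map_intCast_s12 hM)] at hmem

theorem exists_det_dvd_pow_of_forall_mem_finD (hM : M.det ≠ 0)
    (h : ∀ v : Fin m → ℤ, (fun i => (v i : ℚ) / M.det) ∈ FinD M D) :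
    ∃ ℓ : ℕ, ∀ i j, M.det ∣ (M ^ ℓ) i j := by
  have hcol : ∀ j, ∀ᶠ n : ℕ in atTop, ∀ i, M.det ∣ (M ^ n) i j := by
    intro j
    filter_upwards [eventually_pow_mulVec_integral_of_mem_finD hM (h (Pi.single j 1))]
      with n ⟨u, hu⟩ i
    rw [intCast_div_eq_inv_smul, mulVec_smul, ← map_intCast_pow, map_intCast_mulVec_s12,
      mulVec_single_one] at hu
    refine ⟨u i, ?_⟩
    have hi := congrFun hu i
    simp only [col_apply, Pi.smul_apply, smul_eq_mul] at hi
    rw [inv_mul_eq_iff_eq_mul₀ (Int.cast_ne_zero.2 hM)] at hi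
    exact_mod_cast hi
  obtain ⟨ℓ, hℓ⟩ := (eventually_all.2 hcol).exists
  exact ⟨ℓ, fun i j => hℓ j i⟩

end FinD

theorem stmt_12_general {m : ℕ} (M : Matrix (Fin m) (Fin m) ℤ) (hM : M.det ≠ 0)
    (D : Set (Fin m → ℤ))
    (hZ : ∀ z : Fin m → ℤ, (fun i => (z i : ℚ)) ∈ FinD M D) :
    FinD M D = {x | ∃ (k : ℕ) (v : Fin m → ℤ), x = fun i => (v i : ℚ) / (M.det : ℚ) ^ k} ↔
      ∃ ℓ : ℕ, ∀ i j : Fin m, M.det ∣ (M ^ ℓ) i j := by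
  constructor
  · intro h
    refine exists_det_dvd_pow_of_forall_mem_finD (D := D) hM fun v => ?_
    rw [h]
    exact ⟨1, v, by simp⟩
  · rintro ⟨ℓ, hℓ⟩
    refine (finD_subset_intCast_div_det_pow hM).antisymm ?_
    rintro x ⟨k, v, rfl⟩
    exact intCast_div_det_pow_mem_finD hM hZ hℓ k v

theorem stmt_12 {m : ℕ} (M : Matrix (Fin m) (Fin m) ℤ) (hM : M.det ≠ 0)
    (D : Set (Fin m → ℤ)) (hD : D.Finite) (h0 : (0 : Fin m → ℤ) ∈ D)
    (hZ : ∀ z : Fin m → ℤ, (fun i => (z i : ℚ)) ∈ FinD M D) :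
    FinD M D = {x | ∃ (k : ℕ) (v : Fin m → ℤ), x = fun i => (v i : ℚ) / (M.det : ℚ) ^ k} ↔
      ∃ ℓ : ℕ, ∀ i j : Fin m, M.det ∣ (M ^ ℓ) i j :=
  stmt_12_general M hM D hZ
end
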